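/- arXiv:2605.07898 — 2 statements merged into one kernel-verified Lean document; each statement's English description precedes it below -/
import Mathlib

section
/- Let L' be a down-complete sublattice of a complete lattice L. For every nonempty subset X of L', the supremum of X in L' equals the down-interpretation in L' of the supremum of X in L, and the infimum of X in L' equals the down-interpretation in L' of the infimum of X in L. -/
/-- `e : L' → L` represents a down-complete sublattice (dc-sublattice) of the complete
lattice `L` when it is order-reflecting, i.e. the order of `L'` is the restriction of the
order of `L` along `e`. The down-interpretation of `x : L` in `L'` is
`x^{L'} = sup_{L'} { y ∈ L' : e y ≤ x }`. -/
def downInterp {L L' : Type*} [CompleteLattice L] [CompleteLattice L']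
    (e : L' → L) (x : L) : L' :=
  sSup {y : L' | e y ≤ x}

/-- For a nonempty subset  of the dc-sublattice , the supremum (resp. infimum) of 
computed in  equals the down-interpretation in  of the supremum (resp. infimum) of
(the image of)  computed in . -/
theorem sSup_sInf_eq_downInterp {L L' : Type*} [CompleteLattice L] [CompleteLattice L']
    (e : L' → L) (hord : ∀ x y : L', x ≤ y ↔ e x ≤ e y)
    (X : Set L') (hX : X.Nonempty) :
    sSup X = downInterp e (sSup (e '' X)) ∧ sInf X = downInterp e (sInf (e '' X)) := by
  constructor
  · apply le_antisymm
    · apply sSup_le_sSup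
      intro x hx
      exact le_sSup ⟨x, hx, rfl⟩
    · apply sSup_le
      intro y hy
      have h1 : sSup (e '' X) ≤ e (sSup X) := by
        apply sSup_le
        rintro _ ⟨x, hx, rfl⟩
        exact (hord x (sSup X)).mp (le_sSup hx)
      exact (hord y (sSup X)).mpr (le_trans hy h1)
  · apply le_antisymm
    · apply le_sSup
      show e (sInf X) ≤ _
      apply le_sInf
      rintro _ ⟨x, hx, rfl⟩
      exact (hord (sInf X) x).mp (sInf_le hx)
    · apply sSup_le
      intro y hy
      apply le_sInf
      intro x hx
      exact (hord y x).mpr (le_trans hy (sInf_le ⟨x, hx, rfl⟩))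
end

section
/- The necessitation rule fails for many-logic modal structures over 𝕃: there exists a structure with two worlds w₁ (with logic K3→, lattice {T₀,n,F₀}, designated {T₀}) and w₂ (with logic LP→⊥, lattice {T₀,b,F₀}, designated {T₀,b}), w₁Rw₂, and a valuation with v_{w₂}(p) = b, such that p → (p ∨ q) holds at every world but □(p → (p ∨ q)) does not hold at w₁. -/
/-- The six-valued lattice `L6` of the logic `LET_K^+`:
`F < F₀ < n, b < T₀ < T` with `n` and `b` incomparable. -/
inductive L6 : Type
  | T | T0 | b | n | F0 | F
  deriving DecidableEq

instance : Fintype L6 :=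
  ⟨⟨↑[L6.T, L6.T0, L6.b, L6.n, L6.F0, L6.F], by decide⟩, fun x => by cases x <;> decide⟩

namespace L6

/-- The order of `L6` as a Boolean-valued relation. -/
def ble : L6 → L6 → Bool := fun x y =>
  x == y || x == F || y == T || (x == F0 && !(y == F)) || (y == T0 && !(x == T) && !(x == F))

/-- Binary meet of `L6` (the only incomparable pair `n, b` has meet `F₀`). -/
def binf (x y : L6) : L6 := if ble x y then x else if ble y x then y else F0

/-- Binary join of `L6` (the only incomparable pair `n, b` has join `T₀`). -/
def bsup (x y : L6) : L6 := if ble x y then y else if ble y x then x else T0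

private theorem hrefl : ∀ x, ble x x = true := by decide
private theorem htrans : ∀ x y z, ble x y = true → ble y z = true → ble x z = true := by decide
private theorem hantisymm : ∀ x y, ble x y = true → ble y x = true → x = y := by decide
private theorem hsl : ∀ x y, ble x (bsup x y) = true := by decide
private theorem hsr : ∀ x y, ble y (bsup x y) = true := by decide
private theorem hsle : ∀ x y z, ble x z = true → ble y z = true → ble (bsup x y) z = true := by
  decide
private theorem hil : ∀ x y, ble (binf x y) x = true := by decide
private theorem hir : ∀ x y, ble (binf x y) y = true := by decide
private theorem hile : ∀ x y z, ble x y = true → ble x z = true → ble x (binf y z) = true := by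
  decide

instance : Lattice L6 where
  le x y := ble x y = true
  le_refl := hrefl
  le_trans := htrans
  le_antisymm := hantisymm
  sup := bsup
  le_sup_left := hsl
  le_sup_right := hsr
  sup_le := hsle
  inf := binf
  inf_le_left := hil
  inf_le_right := hir
  le_inf := hile

instance : DecidableRel ((· ≤ ·) : L6 → L6 → Prop) :=
  fun x y => inferInstanceAs (Decidable (ble x y = true))

end L6

open L6 in
/-- The implication of the logic K3→ on its lattice N3^w = {T₀, n, F₀}. -/
def impK3 : L6 → L6 → L6 := fun x y =>
  match x with
  | L6.n => L6.T0
  | L6.F0 => L6.T0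
  | _ => y

/-- The implication of the logic LP→⊥ on its lattice B3^w = {T₀, b, F₀}. -/
def impLP : L6 → L6 → L6 := fun x y =>
  match x with
  | L6.F0 => L6.T0
  | _ => y

/-- The down-interpretation of values of L6 into the lattice N3^w = {T₀, n, F₀};
in particular the down-interpretation of b is F₀. -/
def downN3w : L6 → L6
  | L6.T => L6.T0
  | L6.b => L6.F0
  | L6.F => L6.F0
  | x => x

/-- The designated values of K3→. -/
def DK3 : Set L6 := {L6.T0}

/-- The designated values of LP→⊥. -/
def DLP : Set L6 := {L6.T0, L6.b}

/- Since w₂ is the only world accessible from w₁, the value of □A at w₁ is the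
down-interpretation into N3^w of the value of A at w₂. -/
/-- Failure of the necessitation rule: in the two-world structure with
w₁ (logic K3→) accessing only w₂ (logic LP→⊥), and the valuation
v_{w₁}(p) = v_{w₁}(q) = T₀, v_{w₂}(p) = v_{w₂}(q) = b, the formula
p → (p ∨ q) holds at every world, yet its value at w₂, seen from w₁ by the
down-interpretation into N3^w (which is the value of □(p → (p ∨ q)) at w₁,
w₂ being the only accessible world), is not designated in K3→. -/
theorem necessitation_fails :
    -- p → (p ∨ q) holds at w₁ (logic K3→, v_{w₁}(p) = v_{w₁}(q) = T₀)
    impK3 L6.T0 (L6.T0 ⊔ L6.T0) ∈ DK3 ∧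
    -- p → (p ∨ q) holds at w₂ (logic LP→⊥, v_{w₂}(p) = v_{w₂}(q) = b)
    impLP L6.b (L6.b ⊔ L6.b) ∈ DLP ∧
    -- but □(p → (p ∨ q)) does not hold at w₁
    downN3w (impLP L6.b (L6.b ⊔ L6.b)) ∉ DK3 := by
  simp only [sup_idem]
  exact ⟨rfl, Or.inr rfl, fun h => nomatch h⟩
end
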